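/- Let G be a totally disconnected locally compact group, α a continuous endomorphism of G, and U a compact open subgroup of G that is tidy above for α. If U₋₋ is a closed subset of G, then U₊₊ ∩ U = U₊. -/

import Mathlib

open Pointwise Subgroup Filter

variable {G : Type*}

/-- The `n`-fold iterate of an endomorphism `α : G →* G`, as a monoid homomorphism. -/
def iterHom [Group G] (α : G →* G) : ℕ → G →* G
  | 0 => MonoidHom.id G
  | n + 1 => α.comp (iterHom α n)

/-- The descending sequence `U_0 = U`, `U_{n+1} = U ⊓ α(U_n)`. -/
def seqU [Group G] (α : G →* G) (U : Subgroup G) : ℕ → Subgroup G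
  | 0 => U
  | n + 1 => U ⊓ Subgroup.map α (seqU α U n)

/-- `U₊ = ⋂ₙ Uₙ`. -/
def Uplus [Group G] (α : G →* G) (U : Subgroup G) : Subgroup G := ⨅ n, seqU α U n

/-- `U₋ = ⋂ₙ α^{-n}(U)`. -/
def Uminus [Group G] (α : G →* G) (U : Subgroup G) : Subgroup G :=
  ⨅ n, Subgroup.comap (iterHom α n) U

/-- `U₊₊ = ⋃ₙ αⁿ(U₊)` as a subset of `G`. -/
def Upp [Group G] (α : G →* G) (U : Subgroup G) : Set G :=
  ⋃ n, iterHom α n '' (Uplus α U : Set G)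

/-- `U₋₋ = ⋃ₙ α^{-n}(U₋)` as a subset of `G`. -/
def Umm [Group G] (α : G →* G) (U : Subgroup G) : Set G :=
  ⋃ n, iterHom α n ⁻¹' (Uminus α U : Set G)

/-- `U₋ₙ = ⋂_{k=0}^{n} α^{-k}(U)`. -/
def Uneg [Group G] (α : G →* G) (U : Subgroup G) (n : ℕ) : Subgroup G :=
  ⨅ k ∈ Finset.range (n + 1), Subgroup.comap (iterHom α k) U

/-- `U` is tidy above for `α` if `U = U₊U₋`. -/
def TidyAbove [Group G] (α : G →* G) (U : Subgroup G) : Prop :=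
  (U : Set G) = (Uplus α U : Set G) * (Uminus α U : Set G)

/-- `U` is tidy below for `α` if `U₋₋` is closed. -/
def TidyBelow [Group G] [TopologicalSpace G] (α : G →* G) (U : Subgroup G) : Prop :=
  IsClosed (Umm α U)

/-- `U` is tidy for `α` if it is tidy above and tidy below for `α`. -/
def Tidy [Group G] [TopologicalSpace G] (α : G →* G) (U : Subgroup G) : Prop :=
  TidyAbove α U ∧ TidyBelow α U

/-- The scale of `α`: the minimum of `[α(V) : α(V) ∩ V]` over compact open subgroups `V`. -/
noncomputable def scale [Group G] [TopologicalSpace G] (α : G →* G) : ℕ :=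
  sInf {n : ℕ | ∃ V : Subgroup G, IsCompact (V : Set G) ∧ IsOpen (V : Set G) ∧
    n = Subgroup.relIndex V (Subgroup.map α V)}

/-! ### Auxiliary lemmas -/

section Aux

variable [Group G] (α : G →* G) (U : Subgroup G)

lemma iterHom_zero_apply (x : G) : iterHom α 0 x = x := rfl

lemma iterHom_succ_apply (n : ℕ) (x : G) : iterHom α (n + 1) x = α (iterHom α n x) := rfl

lemma iterHom_add_apply (m n : ℕ) (x : G) :
    iterHom α (m + n) x = iterHom α m (iterHom α n x) := by
  induction m with
  | zero => simp [iterHom_zero_apply]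
  | succ m ih =>
      have h : m + 1 + n = (m + n) + 1 := by omega
      rw [h, iterHom_succ_apply, ih, ← iterHom_succ_apply]

lemma iterHom_comm_apply (n : ℕ) (x : G) :
    iterHom α n (α x) = α (iterHom α n x) := by
  induction n with
  | zero => rfl
  | succ n ih => rw [iterHom_succ_apply, ih, iterHom_succ_apply]

lemma continuous_iterHom [TopologicalSpace G] (hα : Continuous α) (n : ℕ) :
    Continuous (iterHom α n) := by
  induction n with
  | zero => exact continuous_id
  | succ n ih => exact hα.comp ih

lemma seqU_le_U : ∀ n, seqU α U n ≤ U
  | 0 => le_rfl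
  | n + 1 => inf_le_left

lemma seqU_succ_le : ∀ n, seqU α U (n + 1) ≤ seqU α U n
  | 0 => inf_le_left
  | n + 1 => le_inf inf_le_left
      (le_trans inf_le_right (Subgroup.map_mono (seqU_succ_le n)))

lemma mem_Uplus {x : G} : x ∈ Uplus α U ↔ ∀ n, x ∈ seqU α U n := Subgroup.mem_iInf

lemma Uplus_le_seqU (n : ℕ) : Uplus α U ≤ seqU α U n := iInf_le _ n

lemma Uplus_le_U : Uplus α U ≤ U := Uplus_le_seqU α U 0

lemma mem_Uminus {x : G} : x ∈ Uminus α U ↔ ∀ n, iterHom α n x ∈ U := by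
  simp [Uminus, Subgroup.mem_iInf, Subgroup.mem_comap]

lemma Uminus_le_U : Uminus α U ≤ U := by
  intro x hx
  exact (mem_Uminus α U).1 hx 0

lemma alpha_mem_Uminus {x : G} (hx : x ∈ Uminus α U) : α x ∈ Uminus α U := by
  rw [mem_Uminus] at hx ⊢
  intro n
  rw [iterHom_comm_apply, ← iterHom_succ_apply]
  exact hx (n + 1)

lemma iter_mem_Uminus {x : G} (hx : x ∈ Uminus α U) (k : ℕ) :
    iterHom α k x ∈ Uminus α U := by
  induction k with
  | zero => exact hx
  | succ k ih => rw [iterHom_succ_apply]; exact alpha_mem_Uminus α U ih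

lemma iter_mem_Uminus_mono {x : G} {n m : ℕ} (hnm : n ≤ m)
    (hx : iterHom α n x ∈ Uminus α U) : iterHom α m x ∈ Uminus α U := by
  obtain ⟨k, rfl⟩ := Nat.exists_eq_add_of_le hnm
  rw [Nat.add_comm n k, iterHom_add_apply]
  exact iter_mem_Uminus α U hx k

lemma mem_Umm {x : G} : x ∈ Umm α U ↔ ∃ n, iterHom α n x ∈ Uminus α U := by
  simp [Umm]

lemma alpha_mem_Umm {x : G} (hx : x ∈ Umm α U) : α x ∈ Umm α U := by
  rw [mem_Umm] at hx ⊢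
  obtain ⟨n, hn⟩ := hx
  refine ⟨n, ?_⟩
  rw [iterHom_comm_apply, ← iterHom_succ_apply]
  exact iter_mem_Uminus_mono α U (Nat.le_succ n) hn

lemma mem_Umm_of_alpha {x : G} (hx : α x ∈ Umm α U) : x ∈ Umm α U := by
  rw [mem_Umm] at hx ⊢
  obtain ⟨n, hn⟩ := hx
  refine ⟨n + 1, ?_⟩
  rwa [iterHom_succ_apply, ← iterHom_comm_apply]

/-- `U₊ ∩ U₋₋` as a subgroup of `G`. -/
def Smg [Group G] (α : G →* G) (U : Subgroup G) : Subgroup G where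
  carrier := (Uplus α U : Set G) ∩ Umm α U
  one_mem' := ⟨one_mem _, (mem_Umm α U).2 ⟨0, by
    simpa [iterHom_zero_apply] using (Uminus α U).one_mem⟩⟩
  mul_mem' := by
    rintro a b ⟨haP, haM⟩ ⟨hbP, hbM⟩
    refine ⟨mul_mem haP hbP, ?_⟩
    obtain ⟨n, hn⟩ := (mem_Umm α U).1 haM
    obtain ⟨m, hm⟩ := (mem_Umm α U).1 hbM
    refine (mem_Umm α U).2 ?_
    refine ⟨max n m, ?_⟩
    rw [map_mul]
    exact mul_mem (iter_mem_Uminus_mono α U (le_max_left n m) hn)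
      (iter_mem_Uminus_mono α U (le_max_right n m) hm)
  inv_mem' := by
    rintro a ⟨haP, haM⟩
    refine ⟨inv_mem haP, ?_⟩
    obtain ⟨n, hn⟩ := (mem_Umm α U).1 haM
    exact (mem_Umm α U).2 ⟨n, by rw [map_inv]; exact inv_mem hn⟩

lemma mem_Smg {x : G} : x ∈ Smg α U ↔ x ∈ Uplus α U ∧ x ∈ Umm α U := Iff.rfl

end Aux

section Top

variable [Group G] [TopologicalSpace G] [IsTopologicalGroup G] [T2Space G]
  (α : G →* G) (U : Subgroup G)

lemma seqU_isCompact_isClosed (hα : Continuous α) (hUc : IsCompact (U : Set G)) :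
    ∀ n, IsCompact (seqU α U n : Set G) ∧ IsClosed (seqU α U n : Set G)
  | 0 => ⟨hUc, hUc.isClosed⟩
  | n + 1 => by
      obtain ⟨hc, _⟩ := seqU_isCompact_isClosed hα hUc n
      have himg : IsCompact (α '' (seqU α U n : Set G)) := hc.image hα
      have hset : (seqU α U (n + 1) : Set G) =
          (U : Set G) ∩ α '' (seqU α U n : Set G) := by
        show ((U ⊓ Subgroup.map α (seqU α U n) : Subgroup G) : Set G) = _
        rw [Subgroup.coe_inf, Subgroup.coe_map]
      rw [hset]
      exact ⟨himg.inter_left hUc.isClosed, hUc.isClosed.inter himg.isClosed⟩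

lemma Uplus_isClosed (hα : Continuous α) (hUc : IsCompact (U : Set G)) :
    IsClosed (Uplus α U : Set G) := by
  have : (Uplus α U : Set G) = ⋂ n, (seqU α U n : Set G) := by
    rw [Uplus, Subgroup.coe_iInf]
  rw [this]
  exact isClosed_iInter fun n => (seqU_isCompact_isClosed α U hα hUc n).2

lemma Uplus_isCompact (hα : Continuous α) (hUc : IsCompact (U : Set G)) :
    IsCompact (Uplus α U : Set G) :=
  hUc.of_isClosed_subset (Uplus_isClosed α U hα hUc)
    (SetLike.coe_subset_coe.2 (Uplus_le_U α U))

lemma Uminus_isClosed (hα : Continuous α) (hUc : IsCompact (U : Set G)) :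
    IsClosed (Uminus α U : Set G) := by
  have : (Uminus α U : Set G) = ⋂ n, iterHom α n ⁻¹' (U : Set G) := by
    rw [Uminus, Subgroup.coe_iInf]
    simp [Subgroup.coe_comap]
  rw [this]
  exact isClosed_iInter fun n => hUc.isClosed.preimage (continuous_iterHom α hα n)

lemma Uplus_le_map (hα : Continuous α) (hUc : IsCompact (U : Set G)) :
    Uplus α U ≤ Subgroup.map α (Uplus α U) := by
  intro u hu
  have hmem : ∀ n, u ∈ seqU α U n := (mem_Uplus α U).1 hu
  set F : ℕ → Set G := fun n => (α ⁻¹' {u}) ∩ (seqU α U n : Set G) with hF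
  have hne : ∀ n, (F n).Nonempty := by
    intro n
    have h1 : u ∈ Subgroup.map α (seqU α U n) := (Subgroup.mem_inf.1 (hmem (n + 1))).2
    obtain ⟨v, hv, hvu⟩ := h1
    exact ⟨v, by simp [hF, hvu], hv⟩
  have hdec : ∀ n, F (n + 1) ⊆ F n := fun n =>
    Set.inter_subset_inter_right _ (SetLike.coe_subset_coe.2 (seqU_succ_le α U n))
  have hcl : ∀ n, IsClosed (F n) := fun n =>
    (isClosed_singleton.preimage hα).inter (seqU_isCompact_isClosed α U hα hUc n).2
  have h0 : IsCompact (F 0) :=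
    (seqU_isCompact_isClosed α U hα hUc 0).1.inter_left (isClosed_singleton.preimage hα)
  obtain ⟨v, hv⟩ :=
    IsCompact.nonempty_iInter_of_sequence_nonempty_isCompact_isClosed F hdec hne h0 hcl
  refine ⟨v, (mem_Uplus α U).2 fun n => (Set.mem_iInter.1 hv n).2, ?_⟩
  have := (Set.mem_iInter.1 hv 0).1
  simpa [hF] using this

lemma mem_Uplus_of_map {x : G} (h1 : x ∈ Subgroup.map α (Uplus α U)) (h2 : x ∈ U) :
    x ∈ Uplus α U := by
  rw [mem_Uplus]
  intro n
  match n with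
  | 0 => exact h2
  | n + 1 =>
      exact Subgroup.mem_inf.2 ⟨h2, Subgroup.map_mono (Uplus_le_seqU α U n) h1⟩

lemma Uplus_le_map_iter (hα : Continuous α) (hUc : IsCompact (U : Set G)) :
    ∀ n, Uplus α U ≤ Subgroup.map (iterHom α n) (Uplus α U)
  | 0 => fun x hx => ⟨x, hx, rfl⟩
  | n + 1 => by
      calc Uplus α U ≤ Subgroup.map α (Uplus α U) := Uplus_le_map α U hα hUc
        _ ≤ Subgroup.map α (Subgroup.map (iterHom α n) (Uplus α U)) :=
            Subgroup.map_mono (Uplus_le_map_iter hα hUc n)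
        _ = Subgroup.map (iterHom α (n + 1)) (Uplus α U) := by
            rw [Subgroup.map_map]; rfl

/-- Key uniformity from closedness of `U₋₋`, via the Baire category theorem applied to the
compact group `U₊ ∩ U₋₋`. -/
lemma exists_uniform (hα : Continuous α) (hUc : IsCompact (U : Set G))
    (hclosed : IsClosed (Umm α U)) :
    ∃ M : ℕ, ∀ x : G, x ∈ Uplus α U → x ∈ Umm α U → iterHom α M x ∈ Uminus α U := by
  set S : Subgroup G := Smg α U with hS
  have hScompact : IsCompact (S : Set G) :=
    (Uplus_isCompact α U hα hUc).inter_right hclosed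
  haveI : CompactSpace S := isCompact_iff_compactSpace.mp hScompact
  haveI : Nonempty S := ⟨1⟩
  -- the closed subgroups of `S` given by `α^{-n}(U₋) ∩ S`
  set T : ℕ → Subgroup S := fun n =>
    Subgroup.comap ((iterHom α n).comp S.subtype) (Uminus α U) with hT
  have hTmem : ∀ (n : ℕ) (x : S), x ∈ T n ↔ iterHom α n (x : G) ∈ Uminus α U :=
    fun n x => Iff.rfl
  have hTmono : ∀ {n m : ℕ}, n ≤ m → T n ≤ T m := by
    intro n m hnm x hx
    exact iter_mem_Uminus_mono α U hnm hx
  have hTclosed : ∀ n, IsClosed (T n : Set S) := by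
    intro n
    have : (T n : Set S) = (fun x : S => iterHom α n (x : G)) ⁻¹' (Uminus α U : Set G) := rfl
    rw [this]
    exact (Uminus_isClosed α U hα hUc).preimage
      ((continuous_iterHom α hα n).comp continuous_subtype_val)
  have hTcover : ⋃ n, (T n : Set S) = Set.univ := by
    ext x
    simp only [Set.mem_iUnion, Set.mem_univ, iff_true, SetLike.mem_coe]
    have hx : (x : G) ∈ Umm α U := x.2.2
    obtain ⟨n, hn⟩ := (mem_Umm α U).1 hx
    exact ⟨n, hn⟩
  -- Baire: some `T N` has nonempty interior, hence is open
  obtain ⟨N, g, hg⟩ := nonempty_interior_of_iUnion_of_closed hTclosed hTcover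
  have hTNopen : IsOpen (T N : Set S) :=
    Subgroup.isOpen_of_mem_nhds (T N) (mem_nhds_iff.mpr
      ⟨interior (T N : Set S), interior_subset, isOpen_interior, hg⟩)
  -- compactness: finitely many of the open subgroups `T (N + m)` cover `S`
  have hopen : ∀ m : ℕ, IsOpen ((T (N + m) : Subgroup S) : Set S) := fun m =>
    Subgroup.isOpen_mono (hTmono (Nat.le_add_right N m)) hTNopen
  have hcov : Set.univ ⊆ ⋃ m : ℕ, ((T (N + m) : Subgroup S) : Set S) := by
    intro x _
    have hx : (x : G) ∈ Umm α U := x.2.2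
    obtain ⟨n, hn⟩ := (mem_Umm α U).1 hx
    exact Set.mem_iUnion.2 ⟨n, hTmono (Nat.le_add_left n N) hn⟩
  obtain ⟨t, ht⟩ := isCompact_univ.elim_finite_subcover _ hopen hcov
  refine ⟨N + t.sup id, ?_⟩
  intro x hxP hxM
  have hxS : (⟨x, hxP, hxM⟩ : S) ∈ ⋃ m ∈ t, ((T (N + m) : Subgroup S) : Set S) :=
    ht (Set.mem_univ _)
  simp only [Set.mem_iUnion, SetLike.mem_coe] at hxS
  obtain ⟨m, hm, hxm⟩ := hxS
  have : T (N + m) ≤ T (N + t.sup id) :=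
    hTmono (Nat.add_le_add_left (Finset.le_sup (f := id) hm) N)
  exact this hxm

lemma exists_iter_preimage (hα : Continuous α) (hUc : IsCompact (U : Set G)) :
    ∀ (k : ℕ) (x : G), x ∈ Uplus α U → x ∈ Umm α U →
      ∃ y : G, y ∈ Uplus α U ∧ y ∈ Umm α U ∧ iterHom α k y = x
  | 0, x, h1, h2 => ⟨x, h1, h2, rfl⟩
  | k + 1, x, h1, h2 => by
      obtain ⟨u, hu, hux⟩ := Uplus_le_map α U hα hUc h1
      have humm : u ∈ Umm α U := mem_Umm_of_alpha α U (by rwa [hux])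
      obtain ⟨y, hy1, hy2, hyk⟩ := exists_iter_preimage hα hUc k u hu humm
      exact ⟨y, hy1, hy2, by rw [iterHom_succ_apply, hyk, hux]⟩

/-- The crucial consequence: `U₊ ∩ U₋₋ ⊆ U₋`. -/
lemma Smg_le_Uminus (hα : Continuous α) (hUc : IsCompact (U : Set G))
    (hclosed : IsClosed (Umm α U)) {x : G}
    (hxP : x ∈ Uplus α U) (hxM : x ∈ Umm α U) : x ∈ Uminus α U := by
  obtain ⟨M, hM⟩ := exists_uniform α U hα hUc hclosed
  obtain ⟨y, hy1, hy2, hyM⟩ := exists_iter_preimage α U hα hUc M x hxP hxM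
  rw [← hyM]
  exact hM y hy1 hy2

/-- `U₊ ∩ U₋₋` is stable under forward iteration, and stays inside `U₊`. -/
lemma iter_mem_Smg (hα : Continuous α) (hUc : IsCompact (U : Set G))
    (hclosed : IsClosed (Umm α U)) {x : G}
    (hxP : x ∈ Uplus α U) (hxM : x ∈ Umm α U) :
    ∀ n, iterHom α n x ∈ Uplus α U ∧ iterHom α n x ∈ Umm α U
  | 0 => ⟨hxP, hxM⟩
  | n + 1 => by
      obtain ⟨hP, hM⟩ := iter_mem_Smg hα hUc hclosed hxP hxM n
      rw [iterHom_succ_apply]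
      constructor
      · refine mem_Uplus_of_map α U ⟨_, hP, rfl⟩ ?_
        have hmin : iterHom α n x ∈ Uminus α U := Smg_le_Uminus α U hα hUc hclosed hP hM
        exact Uminus_le_U α U (alpha_mem_Uminus α U hmin)
      · exact alpha_mem_Umm α U hM

end Top

/-- For `U` tidy above: if `U₋₋` is closed, then `U₊₊ ∩ U = U₊`. -/
theorem upp_inter_eq_uplus [Group G] [TopologicalSpace G] [IsTopologicalGroup G]
    [TotallyDisconnectedSpace G] [LocallyCompactSpace G]
    (α : G →* G) (hα : Continuous α)
    (U : Subgroup G) (hUc : IsCompact (U : Set G)) (hUo : IsOpen (U : Set G))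
    (hU : TidyAbove α U) (hclosed : IsClosed (Umm α U)) :
    Upp α U ∩ (U : Set G) = (Uplus α U : Set G) := by
  haveI : T2Space G := by
    refine (IsTopologicalGroup.t2Space_iff_one_closed).2 ?_
    rw [← connectedComponent_eq_singleton (1 : G)]
    exact isClosed_connectedComponent
  apply Set.Subset.antisymm
  · rintro x ⟨hxUpp, hxU⟩
    obtain ⟨n, w, hw, hwx⟩ := Set.mem_iUnion.1 hxUpp
    -- use tidiness to write `x = b⁻¹ * a⁻¹` with `a ∈ U₊`, `b ∈ U₋`
    have hxinv : x⁻¹ ∈ (U : Set G) := by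
      have : x ∈ U := hxU
      exact SetLike.mem_coe.2 (inv_mem this)
    rw [hU] at hxinv
    obtain ⟨a, ha, b, hb, hab⟩ := hxinv
    have haU : a ∈ Uplus α U := ha
    have hbU : b ∈ Uminus α U := hb
    have hab' : a * b = x⁻¹ := hab
    have hxeq : x = b⁻¹ * a⁻¹ := by
      have h : (a * b)⁻¹ = x := by rw [hab', inv_inv]
      rw [← h, mul_inv_rev]
    have hbinv : b⁻¹ = x * a := by
      rw [hxeq]; group
    -- `b⁻¹ ∈ αⁿ(U₊) ∩ U₋`
    have hxmap : x ∈ Subgroup.map (iterHom α n) (Uplus α U) := ⟨w, hw, hwx⟩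
    have hbmap : b⁻¹ ∈ Subgroup.map (iterHom α n) (Uplus α U) := by
      rw [hbinv]
      exact mul_mem hxmap (Uplus_le_map_iter α U hα hUc n haU)
    obtain ⟨w', hw', hw'b⟩ := hbmap
    have hw'mm : w' ∈ Umm α U := (mem_Umm α U).2 ⟨n, by rw [hw'b]; exact inv_mem hbU⟩
    have hbplus : b⁻¹ ∈ Uplus α U := by
      have := (iter_mem_Smg α U hα hUc hclosed hw' hw'mm n).1
      rwa [hw'b] at this
    rw [hxeq]
    exact SetLike.mem_coe.2 (mul_mem hbplus (inv_mem haU))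
  · intro x hx
    have hxU : x ∈ Uplus α U := hx
    refine ⟨Set.mem_iUnion.2 ⟨0, ⟨x, hxU, rfl⟩⟩, ?_⟩
    exact SetLike.mem_coe.2 (Uplus_le_U α U hxU)
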